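/- Equivalent vertices have equal instantaneous quantum Pagerank: let σ be a permutation of {0,…,N−1} with P_{σ(i),σ(j)} = P_{i,j} for all i, j, and let Σ be its N×N permutation matrix. Then (Σ ⊗ Σ) U_walk = U_walk (Σ ⊗ Σ) and (Σ ⊗ Σ) ψ_0 = ψ_0, where ψ_0 = (1/√N) Σ_{i=0}^{N−1} ψ_i; consequently, for every vertex j and every t ∈ ℕ, the instantaneous quantum Pagerank satisfies Q(σ(j), t) = Q(j, t), where Q(j,t) = ‖(I_N ⊗ e_j†) U_walk^{2t} ψ_0‖². -/

import Mathlib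

/-!
Conjugation by `Σ ⊗ Σ` is the reindexing `A ↦ A.submatrix τ τ` along `τ = σ × σ`, an algebra
automorphism of the matrices on `ℂ^N ⊗ ℂ^N`. The symmetry `P_{σ i, σ j} = P_{i j}` makes the swap
`S` and the projection `Π` fixed by it, hence also `U_walk` and all its powers, and it gives
`ψ_0 ∘ τ = ψ_0`. So the state `U_walk^{2t} ψ_0` is `τ`-invariant, and reindexing the sum defining
`Q(σ j, t)` along `σ` gives `Q(j, t)`.
-/

open Matrix BigOperators

/-- The `i`-th column state of the transition matrix `P`: `(φ_i)_j = √(P_{j,i})`. -/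
noncomputable def colState {N : ℕ} (P : Matrix (Fin N) (Fin N) ℝ) (i : Fin N) :
    Fin N → ℂ :=
  fun j => (Real.sqrt (P j i) : ℂ)

/-- The `i`-th projector state `ψ_i = e_i ⊗ φ_i ∈ ℂ^N ⊗ ℂ^N`. -/
noncomputable def projState {N : ℕ} (P : Matrix (Fin N) (Fin N) ℝ) (i : Fin N) :
    Fin N × Fin N → ℂ :=
  fun p => (if p.1 = i then 1 else 0) * colState P i p.2

/-- The projection `Π = Σ_i ψ_i ψ_i†`, as a matrix on `ℂ^N ⊗ ℂ^N`. -/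
noncomputable def szegedyProj {N : ℕ} (P : Matrix (Fin N) (Fin N) ℝ) :
    Matrix (Fin N × Fin N) (Fin N × Fin N) ℂ :=
  ∑ i : Fin N,
    Matrix.of (fun p q => projState P i p * (starRingEnd ℂ) (projState P i q))

/-- The swap operator `S` on `ℂ^N ⊗ ℂ^N`, determined by `S(u ⊗ v) = v ⊗ u`. -/
def swapOp (N : ℕ) : Matrix (Fin N × Fin N) (Fin N × Fin N) ℂ :=
  Matrix.of (fun p q => if p.1 = q.2 ∧ p.2 = q.1 then 1 else 0)

/-- The Szegedy walk operator `U_walk = S(2Π − I)`. -/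
noncomputable def szegedyWalk {N : ℕ} (P : Matrix (Fin N) (Fin N) ℝ) :
    Matrix (Fin N × Fin N) (Fin N × Fin N) ℂ :=
  swapOp N * ((2 : ℂ) • szegedyProj P - 1)

/-- The initial state `ψ_0 = (1/√N) Σ_i ψ_i` of the quantum Pagerank algorithm. -/
noncomputable def pagerankInit {N : ℕ} (P : Matrix (Fin N) (Fin N) ℝ) :
    Fin N × Fin N → ℂ :=
  fun p => ((Real.sqrt N : ℂ))⁻¹ * ∑ i : Fin N, projState P i p

/-- The instantaneous quantum Pagerank of vertex `j` at time `t`: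
`Q(j,t) = ‖(I_N ⊗ e_j†) U_walk^{2t} ψ_0‖²`. -/
noncomputable def instPagerank {N : ℕ} (P : Matrix (Fin N) (Fin N) ℝ)
    (j : Fin N) (t : ℕ) : ℝ :=
  ∑ a : Fin N,
    Complex.normSq ((szegedyWalk P ^ (2 * t)).mulVec (pagerankInit P) (a, j))

/-- The tensor square `Σ ⊗ Σ` of the permutation matrix of `σ`. -/
def permTensorSq {N : ℕ} (σ : Equiv.Perm (Fin N)) :
    Matrix (Fin N × Fin N) (Fin N × Fin N) ℂ :=
  Matrix.of (fun p q =>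
    (if p.1 = σ q.1 then 1 else 0) * (if p.2 = σ q.2 then 1 else 0))

section PermInvariant

variable {ι R : Type*} [Fintype ι] [CommRing R]

lemma Matrix.commute_permMatrix_symm_of_submatrix_eq [DecidableEq ι] {A : Matrix ι ι R}
    (τ : Equiv.Perm ι) (h : A.submatrix τ τ = A) :
    Commute (Equiv.Perm.permMatrix R τ.symm) A := by
  unfold Commute SemiconjBy
  rw [PEquiv.toMatrix_toPEquiv_mul, PEquiv.mul_toMatrix_toPEquiv]
  conv_lhs => rw [← h, submatrix_submatrix]
  simp

lemma Matrix.submatrix_pow_eq_self [DecidableEq ι] {A : Matrix ι ι R}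
    (τ : Equiv.Perm ι) (h : A.submatrix τ τ = A) (n : ℕ) :
    (A ^ n).submatrix τ τ = A ^ n := by
  have := map_pow (reindexAlgEquiv R R τ.symm) A n
  simpa [h] using this

lemma Matrix.mulVec_comp_eq_self {A : Matrix ι ι R} {v : ι → R}
    (τ : Equiv.Perm ι) (hA : A.submatrix τ τ = A) (hv : v ∘ τ = v) :
    (A *ᵥ v) ∘ τ = A *ᵥ v := by
  conv_rhs => rw [← hA, submatrix_mulVec_equiv, ← hv]
  simp [Function.comp_assoc]

end PermInvariant

section SzegedyWalk

variable {N : ℕ} {P : Matrix (Fin N) (Fin N) ℝ} {σ : Equiv.Perm (Fin N)}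

lemma permTensorSq_eq_permMatrix :
    permTensorSq σ = Equiv.Perm.permMatrix ℂ (σ.prodCongr σ).symm := by
  ext p q
  simp [permTensorSq, PEquiv.toMatrix_apply, Prod.ext_iff, Equiv.symm_apply_eq, ite_and]
  split_ifs <;> rfl

lemma swapOp_submatrix_prodCongr :
    (swapOp N).submatrix (σ.prodCongr σ) (σ.prodCongr σ) = swapOp N := by
  ext p q
  simp [swapOp]

lemma projState_prodCongr (hσ : ∀ i j, P (σ i) (σ j) = P i j) (i : Fin N)
    (p : Fin N × Fin N) :
    projState P (σ i) (σ.prodCongr σ p) = projState P i p := by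
  simp [projState, colState, hσ]

lemma szegedyProj_submatrix_prodCongr (hσ : ∀ i j, P (σ i) (σ j) = P i j) :
    (szegedyProj P).submatrix (σ.prodCongr σ) (σ.prodCongr σ) = szegedyProj P := by
  ext p q
  simp only [szegedyProj, submatrix_apply, Matrix.sum_apply, of_apply]
  rw [← Equiv.sum_comp σ]
  simp only [projState_prodCongr hσ]

lemma szegedyWalk_submatrix_prodCongr (hσ : ∀ i j, P (σ i) (σ j) = P i j) :
    (szegedyWalk P).submatrix (σ.prodCongr σ) (σ.prodCongr σ) = szegedyWalk P := by
  have conj (A) : reindexAlgEquiv ℂ ℂ (σ.prodCongr σ).symm A =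
      A.submatrix (σ.prodCongr σ) (σ.prodCongr σ) := rfl
  rw [← conj, szegedyWalk, map_mul, map_sub, map_smul, map_one, conj, conj,
    swapOp_submatrix_prodCongr, szegedyProj_submatrix_prodCongr hσ]

lemma pagerankInit_comp_prodCongr (hσ : ∀ i j, P (σ i) (σ j) = P i j) :
    pagerankInit P ∘ σ.prodCongr σ = pagerankInit P := by
  ext p
  simp only [pagerankInit, Function.comp_apply]
  rw [← Equiv.sum_comp σ]
  simp only [projState_prodCongr hσ]

lemma instPagerank_apply_perm (hσ : ∀ i j, P (σ i) (σ j) = P i j) (j : Fin N) (t : ℕ) :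
    instPagerank P (σ j) t = instPagerank P j t := by
  have hstate := mulVec_comp_eq_self (σ.prodCongr σ)
    (submatrix_pow_eq_self _ (szegedyWalk_submatrix_prodCongr hσ) (2 * t))
    (pagerankInit_comp_prodCongr hσ)
  unfold instPagerank
  rw [← Equiv.sum_comp σ]
  exact Finset.sum_congr rfl fun a _ => by rw [← congrFun hstate (a, j)]; rfl

end SzegedyWalk

theorem equivalent_vertices_equal_pagerank_general (N : ℕ)
    (P : Matrix (Fin N) (Fin N) ℝ)
    (σ : Equiv.Perm (Fin N)) (hσ : ∀ i j, P (σ i) (σ j) = P i j) :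
    permTensorSq σ * szegedyWalk P = szegedyWalk P * permTensorSq σ ∧
    (permTensorSq σ).mulVec (pagerankInit P) = pagerankInit P ∧
    (∀ (j : Fin N) (t : ℕ), instPagerank P (σ j) t = instPagerank P j t) := by
  rw [permTensorSq_eq_permMatrix]
  refine ⟨(commute_permMatrix_symm_of_submatrix_eq _ (szegedyWalk_submatrix_prodCongr hσ)).eq,
    ?_, instPagerank_apply_perm hσ⟩
  rw [permMatrix_mulVec, Equiv.comp_symm_eq, pagerankInit_comp_prodCongr hσ]

/-- Equivalent vertices have equal instantaneous quantum Pagerank: if `σ` is a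
permutation with `P_{σ(i),σ(j)} = P_{i,j}`, then `Σ ⊗ Σ` commutes with `U_walk` and
fixes `ψ_0`, and consequently `Q(σ(j), t) = Q(j, t)` for all `j` and `t`. -/
theorem equivalent_vertices_equal_pagerank (N : ℕ) (hN : 1 ≤ N)
    (P : Matrix (Fin N) (Fin N) ℝ)
    (hnonneg : ∀ j i, 0 ≤ P j i) (hcol : ∀ i, ∑ j, P j i = 1)
    (σ : Equiv.Perm (Fin N)) (hσ : ∀ i j, P (σ i) (σ j) = P i j) :
    permTensorSq σ * szegedyWalk P = szegedyWalk P * permTensorSq σ ∧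
    (permTensorSq σ).mulVec (pagerankInit P) = pagerankInit P ∧
    (∀ (j : Fin N) (t : ℕ), instPagerank P (σ j) t = instPagerank P j t) :=
  equivalent_vertices_equal_pagerank_general N P σ hσ
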